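/- Let n ≥ 3 be an integer and set k = n!. Let l be any integer, and let s be an integer with 1 ≤ s ≤ n. Then the image under η of the kernel of η_s equals the subgroup s·ℤ of ℤ; that is, { η(α) : α ∈ ℤ^k, η_s(α) = 0 } = s·ℤ. In particular, for distinct s, s' ∈ {1, …, n}, the subgroups η(ker η_s) and η(ker η_{s'}) of ℤ are distinct. -/

import Mathlib

/-!
Since `mod_k(i) ≡ i (mod k)`, the coefficients of `η` and `η_s` differ by `-s` modulo `k`, so
`η - η_s` takes values in `s·ℤ` whenever `s ∣ k`; on the kernel of `η_s` this puts `η` in `s·ℤ`.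
Conversely, if `s + 2 ≤ k` the first two coefficients of `η_s` are `l + 1 + s` and `l + 2 + s`, and
`α = (-(l + 2 + s), l + 1 + s, 0, …, 0)` lies in the kernel of `η_s` with `η(α) = s`.
For `k = n!` and `1 ≤ s ≤ n` both conditions hold once `n ≥ 3`.
-/

/-- `modK k i` is reduction of `i` modulo `k` taking values in `{1, …, k}`:
integers divisible by `k` are sent to `k` rather than `0`. -/
def modK (k : ℕ) (i : ℤ) : ℤ := (i - 1) % (k : ℤ) + 1

/-- `eta k l α = Σ_{i=1}^k (l + mod_k(i)) · α_i` on `ℤ^k = (Fin k → ℤ)`,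
where the `i`-th standard basis vector corresponds to the index `i ∈ {1, …, k}`. -/
def eta (k : ℕ) (l : ℤ) (α : Fin k → ℤ) : ℤ :=
  ∑ i : Fin k, (l + modK k ((i : ℤ) + 1)) * α i

/-- `etaS k l s α = Σ_{i=1}^k (l + mod_k(i + s)) · α_i`. -/
def etaS (k : ℕ) (l s : ℤ) (α : Fin k → ℤ) : ℤ :=
  ∑ i : Fin k, (l + modK k ((i : ℤ) + 1 + s)) * α i

open scoped Nat

theorem modK_modEq (k : ℕ) (i : ℤ) : modK k i ≡ i [ZMOD k] := by
  simpa [modK] using (Int.mod_modEq (i - 1) k).add_right 1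

theorem modK_of_le {k : ℕ} {i : ℤ} (h₁ : 1 ≤ i) (h₂ : i ≤ k) : modK k i = i := by
  rw [modK, Int.emod_eq_of_lt (by omega) (by omega)]
  ring

theorem eta_eq_etaS_zero (k : ℕ) (l : ℤ) (α : Fin k → ℤ) : eta k l α = etaS k l 0 α := by
  simp [eta, etaS]

theorem etaS_add (k : ℕ) (l s : ℤ) (α β : Fin k → ℤ) :
    etaS k l s (α + β) = etaS k l s α + etaS k l s β := by
  simp [etaS, mul_add, Finset.sum_add_distrib]

theorem etaS_single (k : ℕ) (l s : ℤ) (i : Fin k) (c : ℤ) :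
    etaS k l s (Pi.single i c) = (l + modK k ((i : ℤ) + 1 + s)) * c := by
  simp [etaS, Pi.single_apply]

theorem dvd_eta_sub_etaS {k : ℕ} (l : ℤ) {s : ℤ} (hs : s ∣ k) (α : Fin k → ℤ) :
    s ∣ eta k l α - etaS k l s α := by
  rw [eta, etaS, ← Finset.sum_sub_distrib]
  refine Finset.dvd_sum fun i _ => ?_
  set a : ℤ := (i : ℤ) + 1
  have hk : (k : ℤ) ∣ -s - (modK k a - modK k (a + s)) := by
    simpa using ((modK_modEq k a).sub (modK_modEq k (a + s))).dvd
  have hdiff : s ∣ modK k a - modK k (a + s) :=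
    (dvd_sub_right (dvd_neg.mpr dvd_rfl)).mp (hs.trans hk)
  rw [← sub_mul, add_sub_add_left_eq_sub]
  exact hdiff.mul_right _

theorem exists_etaS_eq_zero_eta_eq {k : ℕ} (l : ℤ) {s : ℤ} (hs₀ : 0 ≤ s) (hsk : s + 2 ≤ k)
    (m : ℤ) : ∃ α : Fin k → ℤ, etaS k l s α = 0 ∧ eta k l α = s * m := by
  let i₀ : Fin k := ⟨0, by omega⟩
  let i₁ : Fin k := ⟨1, by omega⟩
  refine ⟨Pi.single i₀ (-m * (l + 2 + s)) + Pi.single i₁ (m * (l + 1 + s)), ?_, ?_⟩ <;>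
    simp only [eta_eq_etaS_zero, etaS_add, etaS_single, i₀, i₁]
  · rw [modK_of_le (by simp; omega) (by simp; omega), modK_of_le (by simp; omega) (by simp; omega)]
    push_cast
    ring
  · rw [modK_of_le (by simp) (by simp; omega), modK_of_le (by simp) (by simp; omega)]
    push_cast
    ring

theorem eta_image_ker_etaS_eq {k : ℕ} (l : ℤ) {s : ℤ} (hs₀ : 0 ≤ s) (hs : s ∣ k)
    (hsk : s + 2 ≤ k) :
    {x : ℤ | ∃ α : Fin k → ℤ, etaS k l s α = 0 ∧ eta k l α = x} = {x : ℤ | s ∣ x} := by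
  ext x
  constructor
  · rintro ⟨α, hker, rfl⟩
    simpa [hker] using dvd_eta_sub_etaS l hs α
  · rintro ⟨m, rfl⟩
    exact exists_etaS_eq_zero_eta_eq l hs₀ hsk m

theorem setOf_dvd_injOn : Set.InjOn (fun s : ℤ => {x : ℤ | s ∣ x}) {s | 0 ≤ s} := by
  intro s hs s' hs' h
  have h₁ : s ∣ s' := (Set.ext_iff.mp h s').mpr (dvd_refl s')
  have h₂ : s' ∣ s := (Set.ext_iff.mp h s).mp (dvd_refl s)
  exact Int.dvd_antisymm hs hs' h₁ h₂

theorem add_two_le_factorial {n : ℕ} (hn : 3 ≤ n) : n + 2 ≤ n ! := by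
  have h₂ : 2 ≤ (n - 1)! := Nat.factorial_le (show 2 ≤ n - 1 by omega)
  have := Nat.mul_factorial_pred (show n ≠ 0 by omega)
  nlinarith

/-- The specialization `k = n!` of the Claim used in the proof of Mashiko's
Theorem 1.3: for `n ≥ 3`, `k = n!`, any `l`, and `1 ≤ s ≤ n`, the image under `η`
of the kernel of `η_s` is exactly `s · ℤ`; in particular for distinct
`s, s' ∈ {1, …, n}` these images are distinct subgroups of `ℤ`. -/
theorem eta_image_ker_etaS_factorial (n : ℕ) (hn : 3 ≤ n) (l : ℤ) :
    (∀ s : ℤ, 1 ≤ s → s ≤ (n : ℤ) →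
      {x : ℤ | ∃ α : Fin (Nat.factorial n) → ℤ,
          etaS (Nat.factorial n) l s α = 0 ∧ eta (Nat.factorial n) l α = x}
        = {x : ℤ | s ∣ x}) ∧
    (∀ s s' : ℤ, 1 ≤ s → s ≤ (n : ℤ) → 1 ≤ s' → s' ≤ (n : ℤ) → s ≠ s' →
      {x : ℤ | ∃ α : Fin (Nat.factorial n) → ℤ,
          etaS (Nat.factorial n) l s α = 0 ∧ eta (Nat.factorial n) l α = x}
        ≠ {x : ℤ | ∃ α : Fin (Nat.factorial n) → ℤ,
          etaS (Nat.factorial n) l s' α = 0 ∧ eta (Nat.factorial n) l α = x}) := by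
  have hfac := add_two_le_factorial hn
  have himage : ∀ s : ℤ, 1 ≤ s → s ≤ (n : ℤ) →
      {x : ℤ | ∃ α : Fin n ! → ℤ, etaS n ! l s α = 0 ∧ eta n ! l α = x} = {x : ℤ | s ∣ x} := by
    intro s hs₁ hsn
    have hs : s ∣ (n ! : ℤ) := by
      lift s to ℕ using (by omega)
      exact Int.natCast_dvd_natCast.mpr (Nat.dvd_factorial (by omega) (by omega))
    exact eta_image_ker_etaS_eq l (by omega) hs (by omega)
  refine ⟨himage, fun s s' hs₁ hsn hs'₁ hs'n hne h => hne ?_⟩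
  rw [himage s hs₁ hsn, himage s' hs'₁ hs'n] at h
  exact setOf_dvd_injOn (by simp; omega) (by simp; omega) h
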